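/- Suppose the weights x_v ∈ [0,1] satisfy the LP constraint that every interesting path has total non-final weight at least 1. For t ∈ [0,1], let S_t = { v ∈ V : ∃ i ∈ {1,…,L}, f_i(v) ≤ t ≤ f_i(v) + x_v }. Then for every t ∈ [0,1], S_t is a feasible solution to the bootstrap problem. -/

import Mathlib

/-!
Suppose an interesting path `v₁ ⋯ v_k` had no non-final vertex in `S_t`, and let `r_j` be the
number of red vertices among `v₁, …, v_j`. Walking along the path, `f_{r_j}(v_j) ≤ t` together
with `v_j ∉ S_t` forces `f_{r_j}(v_j) + x_{v_j} < t`, and extending an optimal path by the edge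
`v_j → v_{j+1}` gives `f_{r_{j+1}}(v_{j+1}) < t`. At the end `f_{L+1}(v_k) < t ≤ 1`, whereas every
`(v_k, L+1)`-interesting path is interesting and so has length at least `1` by the LP constraint.
-/

open scoped ENNReal

/-- Colors of vertices in the circuit DAG. -/
inductive Color where
  | white | blue | red
deriving DecidableEq

variable {V : Type*}

/-- Number of red vertices on a path (given as a list of vertices). -/
def redCount (color : V → Color) (p : List V) : ℕ :=
  (p.filter (fun v => decide (color v = Color.red))).length

/-- Length of a path: the sum of the weights of its non-final vertices. -/
noncomputable def plen (x : V → ℝ≥0∞) (p : List V) : ℝ≥0∞ :=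
  (p.dropLast.map x).sum

/-- `p` is a `(v,i)`-interesting path: it starts at a red vertex, ends at `v`, and
traverses exactly `i` red vertices. -/
def VIPath (E : V → V → Prop) (color : V → Color) (v : V) (i : ℕ) (p : List V) : Prop :=
  ∃ hp : p ≠ [], p.Chain' E ∧ color (p.head hp) = Color.red ∧
    p.getLast hp = v ∧ redCount color p = i

/-- `p` is an interesting path: it starts and ends at red vertices and traverses exactly
`L+1` red vertices. -/
def IntPath (E : V → V → Prop) (color : V → Color) (L : ℕ) (p : List V) : Prop :=
  ∃ hp : p ≠ [], p.Chain' E ∧ color (p.head hp) = Color.red ∧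
    color (p.getLast hp) = Color.red ∧ redCount color p = L + 1

/-- `f_i(v)`: the minimum length of a `(v,i)`-interesting path (`∞` if none exists). -/
noncomputable def fval (E : V → V → Prop) (color : V → Color) (x : V → ℝ≥0∞)
    (v : V) (i : ℕ) : ℝ≥0∞ :=
  sInf (plen x '' {p : List V | VIPath E color v i p})

/-- `δ(u,w)`: the minimum of `x_u + x_{v₂} + ⋯ + x_{v_{k−1}}` over paths `u v₂ … v_{k−1} w`
whose internal vertices `v₂,…,v_{k−1}` are all blue (`∞` if none exists). -/
noncomputable def deltaW (E : V → V → Prop) (color : V → Color) (x : V → ℝ≥0∞)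
    (u w : V) : ℝ≥0∞ :=
  sInf (plen x '' {p : List V | ∃ hp : p ≠ [], p.Chain' E ∧ p.head hp = u ∧
    p.getLast hp = w ∧ 2 ≤ p.length ∧ ∀ z ∈ (p.drop 1).dropLast, color z = Color.blue})

/-- The rounded set `S_t` of the paper. -/
def roundedSet (E : V → V → Prop) (color : V → Color) (L : ℕ) (x : V → ℝ≥0∞) (t : ℝ≥0∞) :
    Set V :=
  {v | ∃ i : ℕ, 1 ≤ i ∧ i ≤ L ∧ fval E color x v i ≤ t ∧ t ≤ fval E color x v i + x v}

lemma redCount_append_singleton (color : V → Color) (q : List V) (w : V) :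
    redCount color (q ++ [w]) = redCount color q + if color w = Color.red then 1 else 0 := by
  by_cases h : color w = Color.red <;> simp [redCount, List.filter_append, h]

lemma plen_append_singleton (x : V → ℝ≥0∞) {q : List V} (hq : q ≠ []) (w : V) :
    plen x (q ++ [w]) = plen x q + x (q.getLast hq) := by
  conv_lhs => rw [plen, List.dropLast_concat, ← List.dropLast_append_getLast hq]
  simp [plen]

lemma one_le_redCount {color : V → Color} {q : List V} (hq : q ≠ [])
    (hhead : color (q.head hq) = Color.red) : 1 ≤ redCount color q :=
  List.length_pos_of_mem (List.mem_filter.mpr ⟨List.head_mem hq, by simpa using hhead⟩)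

lemma fval_one_eq_zero (E : V → V → Prop) {color : V → Color} (x : V → ℝ≥0∞) {v : V}
    (hv : color v = Color.red) : fval E color x v 1 = 0 :=
  nonpos_iff_eq_zero.mp <| sInf_le
    ⟨[v], ⟨List.cons_ne_nil v [], .singleton v, hv, rfl, by simp [redCount, hv]⟩, by simp [plen]⟩

lemma fval_le_fval_add_of_edge {E : V → V → Prop} (color : V → Color) (x : V → ℝ≥0∞)
    {u w : V} (i : ℕ) (hE : E u w) :
    fval E color x w (i + if color w = Color.red then 1 else 0) ≤ fval E color x u i + x u := by
  rw [fval, fval, ENNReal.sInf_add]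
  refine le_iInf₂ ?_
  rintro _ ⟨q, ⟨hq, hchain, hhead, hlast, hred⟩, rfl⟩
  refine sInf_le ⟨q ++ [w], ⟨by simp, ?_, ?_, List.getLast_concat, ?_⟩, ?_⟩
  · exact hchain.append (.singleton w) (by simp [List.getLast?_eq_some_getLast hq, hlast, hE])
  · rwa [List.head_append_of_ne_nil hq]
  · rw [redCount_append_singleton, hred]
  · rw [plen_append_singleton x hq, hlast]

lemma one_le_fval_of_forall_intPath {E : V → V → Prop} {color : V → Color} {L : ℕ}
    {x : V → ℝ≥0∞} (hLP : ∀ q : List V, IntPath E color L q → 1 ≤ plen x q) {v : V}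
    (hv : color v = Color.red) : 1 ≤ fval E color x v (L + 1) := by
  refine le_sInf ?_
  rintro _ ⟨q, ⟨hq, hchain, hhead, hlast, hred⟩, rfl⟩
  exact hLP q ⟨hq, hchain, hhead, hlast ▸ hv, hred⟩

lemma fval_add_lt_of_notMem_roundedSet {E : V → V → Prop} {color : V → Color} {L : ℕ}
    {x : V → ℝ≥0∞} {t : ℝ≥0∞} {v : V} (hv : v ∉ roundedSet E color L x t) {i : ℕ}
    (hi₁ : 1 ≤ i) (hiL : i ≤ L) (hf : fval E color x v i ≤ t) :
    fval E color x v i + x v < t :=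
  not_le.mp fun h => hv ⟨i, hi₁, hiL, hf, h⟩

lemma fval_add_lt_of_forall_notMem_roundedSet {E : V → V → Prop} {color : V → Color} {L : ℕ}
    {x : V → ℝ≥0∞} {t : ℝ≥0∞} (q : List V) (hq : q ≠ []) (hchain : q.IsChain E)
    (hhead : color (q.head hq) = Color.red) (hred : redCount color q ≤ L)
    (hS : ∀ u ∈ q, u ∉ roundedSet E color L x t) :
    fval E color x (q.getLast hq) (redCount color q) + x (q.getLast hq) < t := by
  induction q using List.reverseRecOn with
  | nil => exact absurd rfl hq
  | append_singleton q w ih =>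
    have hwS : w ∉ roundedSet E color L x t := hS w (by simp)
    rw [List.getLast_concat]
    rcases eq_or_ne q [] with rfl | hq'
    · have hw : color w = Color.red := hhead
      have hsingle : redCount color [w] = 1 := by simp [redCount, hw]
      rw [List.nil_append, hsingle] at hred ⊢
      exact fval_add_lt_of_notMem_roundedSet hwS le_rfl hred (by simp [fval_one_eq_zero E x hw])
    · have hred₁ := one_le_redCount hq hhead
      rw [List.head_append_of_ne_nil hq'] at hhead
      have hredq : redCount color q ≤ L :=
        (Nat.le_add_right _ _).trans (redCount_append_singleton color q w ▸ hred)
      have hprefix := ih hq' hchain.left_of_append hhead hredq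
        (fun u hu => hS u (List.mem_append_left _ hu))
      have hE : E (q.getLast hq') w :=
        hchain.rel_getLast_head_of_append hq' (List.cons_ne_nil w [])
      have hf : fval E color x w (redCount color (q ++ [w])) < t := by
        rw [redCount_append_singleton]
        exact (fval_le_fval_add_of_edge color x _ hE).trans_lt hprefix
      exact fval_add_lt_of_notMem_roundedSet hwS hred₁ hred hf.le

theorem stmt6_general (E : V → V → Prop) (color : V → Color) (L : ℕ)
    (x : V → ℝ≥0∞)
    (hLP : ∀ q : List V, IntPath E color L q → 1 ≤ plen x q)
    (t : ℝ≥0∞) (ht : t ≤ 1) :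
    ∀ p : List V, IntPath E color L p →
      ∃ u ∈ p.dropLast,
        u ∈ {v : V | ∃ i : ℕ, 1 ≤ i ∧ i ≤ L ∧
              fval E color x v i ≤ t ∧ t ≤ fval E color x v i + x v} := by
  rintro p hp
  rcases p.eq_nil_or_concat with rfl | ⟨q, w, rfl⟩
  · exact absurd rfl hp.1
  rw [List.concat_eq_append] at hp ⊢
  obtain ⟨hqw, hchain, hhead, hlast, hred⟩ := id hp
  rw [List.getLast_concat] at hlast
  rw [List.dropLast_concat]
  by_contra hcon
  have hS : ∀ u ∈ q, u ∉ roundedSet E color L x t := fun u hu hu' => hcon ⟨u, hu, hu'⟩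
  rcases eq_or_ne q [] with rfl | hq
  · simpa [plen] using hLP [w] hp
  have hredq : redCount color q = L := by
    rw [redCount_append_singleton, if_pos hlast] at hred
    omega
  rw [List.head_append_of_ne_nil hq] at hhead
  have hprefix := fval_add_lt_of_forall_notMem_roundedSet q hq hchain.left_of_append hhead
    hredq.le hS
  have hE : E (q.getLast hq) w := hchain.rel_getLast_head_of_append hq (List.cons_ne_nil w [])
  have hstep := fval_le_fval_add_of_edge color x (redCount color q) hE
  rw [if_pos hlast, hredq] at hstep
  rw [hredq] at hprefix
  exact (one_le_fval_of_forall_intPath hLP hlast).not_gt ((hstep.trans_lt hprefix).trans_le ht)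

/-- if the weights satisfy the LP constraint, then for every `t ∈ [0,1]` the
rounded set `S_t = {v : ∃ i ∈ {1,…,L}, f_i(v) ≤ t ≤ f_i(v) + x_v}` is a feasible bootstrap
solution, i.e. every interesting path has a non-final vertex in `S_t`. -/
theorem stmt6 (E : V → V → Prop) (color : V → Color) (L : ℕ) (hL : 1 ≤ L)
    (x : V → ℝ≥0∞) (hx : ∀ v, x v ≤ 1)
    (hLP : ∀ q : List V, IntPath E color L q → 1 ≤ plen x q)
    (t : ℝ≥0∞) (ht : t ≤ 1) :
    ∀ p : List V, IntPath E color L p →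
      ∃ u ∈ p.dropLast,
        u ∈ {v : V | ∃ i : ℕ, 1 ≤ i ∧ i ≤ L ∧
              fval E color x v i ≤ t ∧ t ≤ fval E color x v i + x v} :=
  stmt6_general E color L x hLP t ht
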